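/- Under the hypotheses of the global existence theorem (0 < ε < 1/(4η) and ess sup_ξ |ξ|²|û₀| + sup_t ess sup_ξ |F̂(·,t)| < ε), assume in addition that û₀ is homogeneous of degree −2 in the sense that for every λ > 0 and a.e. ξ, û₀(ξ) = λ^{−2} û₀(ξ/λ), and that F̂ satisfies for every λ > 0, every t ≥ 0 and a.e. ξ: F̂(ξ,t) = F̂(ξ/λ, λ²t). Then the unique mild solution û with sup_{t≥0} ess sup_ξ |ξ|²|û(ξ,t)| ≤ 2ε is self-similar: for every λ > 0, every t ≥ 0 and a.e. ξ, û(ξ,t) = λ^{−2} û(ξ/λ, λ²t). -/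

import Mathlib

open MeasureTheory Filter
open scoped ENNReal

noncomputable section

abbrev E3 : Type := EuclideanSpace ℝ (Fin 3)
abbrev V3 : Type := Fin 3 → ℂ

/-- The `PM^a` norm (on the Fourier side): `ess sup_ξ |ξ|^a |g(ξ)|`, valued in `ℝ≥0∞`. -/
def PMnorm (a : ℝ) (g : E3 → V3) : ℝ≥0∞ :=
  essSup (fun ξ : E3 => ENNReal.ofReal (‖ξ‖ ^ a * ‖g ξ‖)) volume

/-- The symbol `P̂(ξ)_{jk} = δ_{jk} − ξ_j ξ_k / |ξ|²` of the Leray projector. -/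
def LerayP (ξ : E3) : Matrix (Fin 3) (Fin 3) ℂ :=
  fun j k => (if j = k then (1 : ℂ) else 0) - ((ξ j : ℂ) * (ξ k : ℂ)) / ((‖ξ‖ : ℂ) ^ 2)

/-- The matrix-valued convolution
`Ŵ[v,w](ξ)_{jk} = (2π)^{-3/2} ∫ v_j(ξ−z) w_k(z) dz`
(the Fourier transform of the tensor product `v ⊗ w`). -/
def Wconv (v w : E3 → V3) (ξ : E3) : Matrix (Fin 3) (Fin 3) ℂ :=
  fun j k => (((2 * Real.pi) ^ ((3 : ℝ) / 2))⁻¹ : ℝ) • ∫ z : E3, v (ξ - z) j * w z k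

/-- The vector `iξ·Ŵ[v,w](ξ)`, with components `Σ_k iξ_k Ŵ[v,w](ξ)_{jk}`. -/
def ixW (v w : E3 → V3) (ξ : E3) : V3 :=
  fun j => ∑ k : Fin 3, Complex.I * (ξ k : ℂ) * Wconv v w ξ j k

/-- The Fourier side of the Navier–Stokes bilinear Duhamel term
`B(u,v)(t) = −∫₀ᵗ S(t−τ) P ∇·(u⊗v) dτ` (up to sign):
`∫₀ᵗ e^{−(t−τ)|ξ|²} P̂(ξ)( iξ·Ŵ[û(τ),v̂(τ)](ξ) ) dτ`. -/
def Bterm (u v : E3 → ℝ → V3) (ξ : E3) (t : ℝ) : V3 :=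
  ∫ τ in (0 : ℝ)..t, Real.exp (-(t - τ) * ‖ξ‖ ^ 2) •
    (LerayP ξ).mulVec (ixW (fun ζ => u ζ τ) (fun ζ => v ζ τ) ξ)

/-- The Fourier side of the Duhamel force term `∫₀ᵗ S(t−τ) P F(τ) dτ`. -/
def Fterm (F : E3 → ℝ → V3) (ξ : E3) (t : ℝ) : V3 :=
  ∫ τ in (0 : ℝ)..t, Real.exp (-(t - τ) * ‖ξ‖ ^ 2) • (LerayP ξ).mulVec (F ξ τ)

/-- `sup_{t ≥ 0} ‖u(t)‖_{PM^a}`. -/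
def supPM (a : ℝ) (u : E3 → ℝ → V3) : ℝ≥0∞ :=
  ⨆ (t : ℝ) (_ : 0 ≤ t), PMnorm a (fun ξ => u ξ t)

/-- A Fourier-side mild solution of the Navier–Stokes system with data `(û₀, F̂)`:
`û` is jointly measurable, all integrals converge absolutely, and for every `t ≥ 0`
and a.e. `ξ`,
`û(ξ,t) = e^{−t|ξ|²} û₀(ξ) − ∫₀ᵗ e^{−(t−τ)|ξ|²} P̂(ξ)(iξ·Ŵ[û(τ),û(τ)](ξ)) dτ
 + ∫₀ᵗ e^{−(t−τ)|ξ|²} P̂(ξ) F̂(ξ,τ) dτ`. -/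
def IsMildSolution (u0 : E3 → V3) (F : E3 → ℝ → V3) (u : E3 → ℝ → V3) : Prop :=
  Measurable (fun p : E3 × ℝ => u p.1 p.2) ∧
  ∀ t : ℝ, 0 ≤ t → ∀ᵐ ξ : E3,
    (∀ τ ∈ Set.Icc (0 : ℝ) t, ∀ j k : Fin 3,
        Integrable (fun z : E3 => u (ξ - z) τ j * u z τ k)) ∧
    IntervalIntegrable (fun τ : ℝ =>
        Real.exp (-(t - τ) * ‖ξ‖ ^ 2) •
          (LerayP ξ).mulVec (ixW (fun ζ => u ζ τ) (fun ζ => u ζ τ) ξ)) volume 0 t ∧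
    IntervalIntegrable (fun τ : ℝ =>
        Real.exp (-(t - τ) * ‖ξ‖ ^ 2) • (LerayP ξ).mulVec (F ξ τ)) volume 0 t ∧
    u ξ t = Real.exp (-t * ‖ξ‖ ^ 2) • u0 ξ - Bterm u u ξ t + Fterm F ξ t

/-- `η` is a constant for which the `PM²` bilinear estimate holds:
`‖B(u,v)(t)‖_{PM²} ≤ η (sup_τ ‖u(τ)‖_{PM²})(sup_τ ‖v(τ)‖_{PM²})`. -/
def BilinearEstimate (η : ℝ) : Prop :=
  ∀ u v : E3 → ℝ → V3,
    Measurable (fun p : E3 × ℝ => u p.1 p.2) →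
    Measurable (fun p : E3 × ℝ => v p.1 p.2) →
    ∀ t : ℝ, 0 ≤ t →
      PMnorm 2 (fun ξ => Bterm u v ξ t) ≤ ENNReal.ofReal η * supPM 2 u * supPM 2 v

/-!
The Fourier-side equation is invariant under `û(ξ,t) ↦ λ⁻² û(ξ/λ, λ²t)`: the heat factor
`e^{-t|ξ|²}` and the Leray symbol are invariant, the convolution `Ŵ` of two rescaled
functions picks up a factor `λ⁻¹` that the multiplier `iξ` turns back into invariance, and the
time substitution `σ = λ²τ` in the Duhamel integrals produces the overall factor `λ⁻²`. The
`PM²` norm is also invariant. Hence for homogeneous data the rescaled solution is a mild solution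
with the same bound, and uniqueness forces it to be `û` itself.
-/

open Set
open scoped Interval

/-- On the physical side this is `a ↦ λ a(λx)`. -/
def dilate (lam : ℝ) (a : E3 → V3) : E3 → V3 := fun ξ => (lam ^ 2)⁻¹ • a (lam⁻¹ • ξ)

def parabolicRescale (lam : ℝ) (u : E3 → ℝ → V3) : E3 → ℝ → V3 :=
  fun ξ t => dilate lam (fun ζ => u ζ (lam ^ 2 * t)) ξ

/-- The common integrand of `Bterm` and `Fterm`, with `s = t - τ`. -/
def heatLeray (ξ : E3) (s : ℝ) (w : V3) : V3 := Real.exp (-s * ‖ξ‖ ^ 2) • (LerayP ξ).mulVec w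

lemma LerayP_smul {c : ℝ} (hc : c ≠ 0) (ξ : E3) : LerayP (c • ξ) = LerayP ξ := by
  ext j k
  simp only [LerayP, PiLp.smul_apply, smul_eq_mul, norm_smul, Real.norm_eq_abs,
    Complex.ofReal_mul]
  congr 1
  have hc' : (c : ℂ) ≠ 0 := Complex.ofReal_ne_zero.2 hc
  rw [mul_pow, ← Complex.ofReal_pow, sq_abs, Complex.ofReal_pow]
  field_simp

section Scaling

variable {lam : ℝ}

lemma exp_heat_scale (h : lam ≠ 0) (ξ : E3) (s : ℝ) :
    Real.exp (-(lam ^ 2 * s) * ‖lam⁻¹ • ξ‖ ^ 2) = Real.exp (-s * ‖ξ‖ ^ 2) := by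
  rw [norm_smul, mul_pow, Real.norm_eq_abs, sq_abs]
  field_simp

lemma heatLeray_scale (h : lam ≠ 0) (ξ : E3) (s : ℝ) (w : V3) :
    heatLeray (lam⁻¹ • ξ) (lam ^ 2 * s) w = heatLeray ξ s w := by
  rw [heatLeray, heatLeray, exp_heat_scale h, LerayP_smul (inv_ne_zero h)]

lemma dilate_sub_mul_dilate (a b : E3 → V3) (ξ z : E3) (j k : Fin 3) :
    dilate lam a (ξ - z) j * dilate lam b z k
      = ((lam ^ 2)⁻¹ * (lam ^ 2)⁻¹) • (a (lam⁻¹ • ξ - lam⁻¹ • z) j * b (lam⁻¹ • z) k) := by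
  simp only [dilate, smul_sub, Pi.smul_apply, smul_mul_smul_comm]

lemma integrable_dilate_sub_mul_dilate (h : lam ≠ 0) {a b : E3 → V3} {ξ : E3} {j k : Fin 3}
    (hab : Integrable (fun z => a (lam⁻¹ • ξ - z) j * b z k)) :
    Integrable (fun z => dilate lam a (ξ - z) j * dilate lam b z k) := by
  simp only [dilate_sub_mul_dilate]
  exact (hab.comp_smul (inv_ne_zero h)).smul ((lam ^ 2)⁻¹ * (lam ^ 2)⁻¹ : ℝ)

lemma Wconv_dilate (h : 0 < lam) (a b : E3 → V3) (ξ : E3) :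
    Wconv (dilate lam a) (dilate lam b) ξ = lam⁻¹ • Wconv a b (lam⁻¹ • ξ) := by
  ext j k
  simp only [Wconv, Matrix.smul_apply, dilate_sub_mul_dilate, integral_smul,
    Measure.integral_comp_smul volume (fun w => a (lam⁻¹ • ξ - w) j * b w k),
    finrank_euclideanSpace_fin, smul_smul]
  congr 1
  rw [abs_of_pos (by positivity)]
  field_simp

lemma ixW_dilate (h : 0 < lam) (a b : E3 → V3) (ξ : E3) :
    ixW (dilate lam a) (dilate lam b) ξ = ixW a b (lam⁻¹ • ξ) := by
  ext j
  refine Finset.sum_congr rfl fun k _ => ?_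
  rw [Wconv_dilate h, Matrix.smul_apply, PiLp.smul_apply, Complex.real_smul, smul_eq_mul]
  push_cast
  field_simp

lemma ixW_parabolicRescale (h : 0 < lam) (u v : E3 → ℝ → V3) (τ : ℝ) (ξ : E3) :
    ixW (fun ζ => parabolicRescale lam u ζ τ) (fun ζ => parabolicRescale lam v ζ τ) ξ
      = ixW (fun ζ => u ζ (lam ^ 2 * τ)) (fun ζ => v ζ (lam ^ 2 * τ)) (lam⁻¹ • ξ) :=
  ixW_dilate h _ _ ξ

lemma ae_heatLeray_eq_comp_mul (h : lam ≠ 0) {f g : ℝ → V3} {ξ : E3} {t : ℝ}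
    (hfg : ∀ᵐ τ, τ ∈ Ι 0 t → f τ = g (lam ^ 2 * τ)) :
    ∀ᵐ τ, τ ∈ Ι 0 t → heatLeray ξ (t - τ) (f τ)
      = heatLeray (lam⁻¹ • ξ) (lam ^ 2 * t - lam ^ 2 * τ) (g (lam ^ 2 * τ)) := by
  filter_upwards [hfg] with τ hτ hmem
  rw [hτ hmem, ← mul_sub, heatLeray_scale h]

lemma integral_heatLeray_comp_mul (h : lam ≠ 0) {f g : ℝ → V3} {ξ : E3} {t : ℝ}
    (hfg : ∀ᵐ τ, τ ∈ Ι 0 t → f τ = g (lam ^ 2 * τ)) :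
    ∫ τ in 0..t, heatLeray ξ (t - τ) (f τ)
      = (lam ^ 2)⁻¹ • ∫ σ in 0..lam ^ 2 * t, heatLeray (lam⁻¹ • ξ) (lam ^ 2 * t - σ) (g σ) := by
  rw [intervalIntegral.integral_congr_ae (ae_heatLeray_eq_comp_mul h hfg),
    intervalIntegral.integral_comp_mul_left
      (fun σ => heatLeray (lam⁻¹ • ξ) (lam ^ 2 * t - σ) (g σ)) (pow_ne_zero 2 h), mul_zero]

lemma intervalIntegrable_heatLeray_of_comp_mul (h : lam ≠ 0) {f g : ℝ → V3} {ξ : E3} {t : ℝ}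
    (hfg : ∀ᵐ τ, τ ∈ Ι 0 t → f τ = g (lam ^ 2 * τ))
    (hg : IntervalIntegrable (fun σ => heatLeray (lam⁻¹ • ξ) (lam ^ 2 * t - σ) (g σ))
      volume 0 (lam ^ 2 * t)) :
    IntervalIntegrable (fun τ => heatLeray ξ (t - τ) (f τ)) volume 0 t := by
  have hg' := hg.comp_mul_left (c := lam ^ 2)
  rw [zero_div, mul_div_cancel_left₀ _ (pow_ne_zero 2 h)] at hg'
  refine hg'.congr_ae ((ae_restrict_iff' measurableSet_uIoc).2 ?_)
  filter_upwards [ae_heatLeray_eq_comp_mul h hfg] with τ hτ hmem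
  exact (hτ hmem).symm

lemma Bterm_parabolicRescale (h : 0 < lam) (u v : E3 → ℝ → V3) (ξ : E3) (t : ℝ) :
    Bterm (parabolicRescale lam u) (parabolicRescale lam v) ξ t
      = (lam ^ 2)⁻¹ • Bterm u v (lam⁻¹ • ξ) (lam ^ 2 * t) :=
  integral_heatLeray_comp_mul h.ne' (Eventually.of_forall fun τ _ => ixW_parabolicRescale h u v τ ξ)

lemma PMnorm_dilate_le (h : lam ≠ 0) (a : E3 → V3) : PMnorm 2 (dilate lam a) ≤ PMnorm 2 a := by
  have hpt : ∀ ξ : E3, ‖ξ‖ ^ (2 : ℝ) * ‖dilate lam a ξ‖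
      = ‖lam⁻¹ • ξ‖ ^ (2 : ℝ) * ‖a (lam⁻¹ • ξ)‖ := by
    intro ξ
    simp only [dilate, Real.rpow_two, norm_smul, norm_inv, norm_pow, Real.norm_eq_abs, sq_abs,
      mul_pow, inv_pow]
    field_simp
  simp only [PMnorm, hpt]
  exact essSup_le_of_ae_le _
    ((Measure.quasiMeasurePreserving_smul volume (inv_ne_zero h)).ae (ENNReal.ae_le_essSup _))

lemma supPM_parabolicRescale_le (h : lam ≠ 0) (u : E3 → ℝ → V3) :
    supPM 2 (parabolicRescale lam u) ≤ supPM 2 u :=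
  iSup₂_le fun t ht => (PMnorm_dilate_le h _).trans
    (le_iSup₂_of_le (f := fun s (_ : 0 ≤ s) => PMnorm 2 (fun ξ => u ξ s)) (lam ^ 2 * t)
      (by positivity) le_rfl)

lemma measurable_comp_scale {G : E3 → ℝ → V3} (hG : Measurable (fun p : E3 × ℝ => G p.1 p.2))
    (lam : ℝ) : Measurable (fun p : E3 × ℝ => G (lam⁻¹ • p.1) (lam ^ 2 * p.2)) :=
  hG.comp (by fun_prop : Measurable fun p : E3 × ℝ => (lam⁻¹ • p.1, lam ^ 2 * p.2))

lemma ae_ae_eq_comp_scale {F : E3 → ℝ → V3} (hFm : Measurable (fun p : E3 × ℝ => F p.1 p.2))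
    (hF : ∀ t : ℝ, 0 ≤ t → ∀ᵐ ξ : E3, F ξ t = F (lam⁻¹ • ξ) (lam ^ 2 * t)) :
    ∀ᵐ ξ : E3, ∀ᵐ τ : ℝ, 0 ≤ τ → F ξ τ = F (lam⁻¹ • ξ) (lam ^ 2 * τ) := by
  refine (Measure.ae_ae_comm ?_).2 (Eventually.of_forall fun τ => ?_)
  · refine ((measurable_snd (measurableSet_Ici (a := (0 : ℝ)))).compl.union
      (measurableSet_eq_fun hFm (measurable_comp_scale hFm lam))).congr ?_
    ext
    simp [imp_iff_not_or]
  · rcases le_or_gt 0 τ with hτ | hτ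
    · exact (hF τ hτ).mono fun ξ hξ _ => hξ
    · exact Eventually.of_forall fun ξ hτ' => absurd hτ' hτ.not_ge

end Scaling

theorem IsMildSolution.rescale {lam : ℝ} {u0 : E3 → V3} {F u : E3 → ℝ → V3} (h : 0 < lam)
    (hu0 : ∀ᵐ ξ, u0 ξ = dilate lam u0 ξ)
    (hF : ∀ᵐ ξ, ∀ᵐ τ, 0 ≤ τ → F ξ τ = F (lam⁻¹ • ξ) (lam ^ 2 * τ))
    (hu : IsMildSolution u0 F u) : IsMildSolution u0 F (parabolicRescale lam u) := by
  refine ⟨(measurable_comp_scale hu.1 lam).const_smul ((lam ^ 2)⁻¹ : ℝ), fun t ht => ?_⟩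
  have hu_t := (Measure.quasiMeasurePreserving_smul volume (inv_ne_zero h.ne')).ae
    (hu.2 (lam ^ 2 * t) (by positivity))
  filter_upwards [hu_t, hF, hu0] with ξ ⟨hconv, hBint, hFint, hduhamel⟩ hFξ hu0ξ
  have hFξ' : ∀ᵐ τ, τ ∈ Ι 0 t → F ξ τ = F (lam⁻¹ • ξ) (lam ^ 2 * τ) := by
    filter_upwards [hFξ] with τ hτ hmem
    exact hτ (by rw [uIoc_of_le ht] at hmem; exact hmem.1.le)
  have hixW : ∀ᵐ τ, τ ∈ Ι 0 t → _ := Eventually.of_forall fun τ (_ : τ ∈ Ι 0 t) =>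
    ixW_parabolicRescale h u u τ ξ
  refine ⟨fun τ hτ j k => integrable_dilate_sub_mul_dilate h.ne' (hconv (lam ^ 2 * τ)
      ⟨mul_nonneg (sq_nonneg _) hτ.1, mul_le_mul_of_nonneg_left hτ.2 (sq_nonneg _)⟩ j k),
    intervalIntegrable_heatLeray_of_comp_mul h.ne' hixW hBint,
    intervalIntegrable_heatLeray_of_comp_mul h.ne' hFξ' hFint, ?_⟩
  have hFterm : Fterm F ξ t = (lam ^ 2)⁻¹ • Fterm F (lam⁻¹ • ξ) (lam ^ 2 * t) :=
    integral_heatLeray_comp_mul h.ne' hFξ'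
  change (lam ^ 2)⁻¹ • u (lam⁻¹ • ξ) (lam ^ 2 * t) = _
  rw [hduhamel, exp_heat_scale h.ne', Bterm_parabolicRescale h, hFterm, hu0ξ, dilate, smul_add,
    smul_sub, smul_comm (lam ^ 2)⁻¹ (Real.exp _)]

theorem self_similar_solution_general (ε : ℝ)
    (u0 : E3 → V3) (F : E3 → ℝ → V3)
    (hFm : Measurable (fun p : E3 × ℝ => F p.1 p.2))
    (hu0hom : ∀ lam : ℝ, 0 < lam → ∀ᵐ ξ : E3, u0 ξ = (lam ^ 2)⁻¹ • u0 (lam⁻¹ • ξ))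
    (hFhom : ∀ lam : ℝ, 0 < lam → ∀ t : ℝ, 0 ≤ t →
      ∀ᵐ ξ : E3, F ξ t = F (lam⁻¹ • ξ) (lam ^ 2 * t))
    (u : E3 → ℝ → V3) (hu : IsMildSolution u0 F u)
    (hub : supPM 2 u ≤ ENNReal.ofReal (2 * ε))
    (huniq : ∀ v : E3 → ℝ → V3, IsMildSolution u0 F v →
      supPM 2 v ≤ ENNReal.ofReal (2 * ε) →
      ∀ t : ℝ, 0 ≤ t → ∀ᵐ ξ : E3, v ξ t = u ξ t) :
    ∀ lam : ℝ, 0 < lam → ∀ t : ℝ, 0 ≤ t → ∀ᵐ ξ : E3,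
      u ξ t = (lam ^ 2)⁻¹ • u (lam⁻¹ • ξ) (lam ^ 2 * t) := by
  intro lam hlam t ht
  have hv : IsMildSolution u0 F (parabolicRescale lam u) :=
    hu.rescale hlam (hu0hom lam hlam) (ae_ae_eq_comp_scale hFm (hFhom lam hlam))
  filter_upwards [huniq _ hv ((supPM_parabolicRescale_le hlam.ne' u).trans hub) t ht] with ξ hξ
  exact hξ.symm

/-- **Self-similar solutions:** under the hypotheses of the global existence
theorem, if `û₀` is homogeneous of degree `−2` (i.e. `u₀` homogeneous of degree
`−1`) and `F̂(ξ,t) = F̂(ξ/λ, λ²t)` (i.e. `λ³F(λx,λ²t) = F(x,t)`), then the unique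
mild solution `û` with `sup_{t≥0}‖û(t)‖_{PM²} ≤ 2ε` is self-similar:
`û(ξ,t) = λ^{−2} û(ξ/λ, λ²t)` for every `λ > 0`, `t ≥ 0`, a.e. `ξ`. -/
theorem self_similar_solution (η ε : ℝ) (hη : 0 < η) (hB : BilinearEstimate η)
    (hε : 0 < ε) (hε' : ε < 1 / (4 * η))
    (u0 : E3 → V3) (F : E3 → ℝ → V3)
    (hu0m : Measurable u0) (hFm : Measurable (fun p : E3 × ℝ => F p.1 p.2))
    (hsmall : PMnorm 2 u0 + supPM 0 F < ENNReal.ofReal ε)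
    (hu0hom : ∀ lam : ℝ, 0 < lam → ∀ᵐ ξ : E3, u0 ξ = (lam ^ 2)⁻¹ • u0 (lam⁻¹ • ξ))
    (hFhom : ∀ lam : ℝ, 0 < lam → ∀ t : ℝ, 0 ≤ t →
      ∀ᵐ ξ : E3, F ξ t = F (lam⁻¹ • ξ) (lam ^ 2 * t))
    (u : E3 → ℝ → V3) (hu : IsMildSolution u0 F u)
    (hub : supPM 2 u ≤ ENNReal.ofReal (2 * ε))
    (huniq : ∀ v : E3 → ℝ → V3, IsMildSolution u0 F v →
      supPM 2 v ≤ ENNReal.ofReal (2 * ε) →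
      ∀ t : ℝ, 0 ≤ t → ∀ᵐ ξ : E3, v ξ t = u ξ t) :
    ∀ lam : ℝ, 0 < lam → ∀ t : ℝ, 0 ≤ t → ∀ᵐ ξ : E3,
      u ξ t = (lam ^ 2)⁻¹ • u (lam⁻¹ • ξ) (lam ^ 2 * t) :=
  self_similar_solution_general ε u0 F hFm hu0hom hFhom u hu hub huniq
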